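/- Lipschitz control of iterated stochastic approximation kernels (Proposition 4.2bis). Let P_k, k=0,…,N−1, be the transition kernels of the Markov chain defined by the stochastic approximation scheme, P_k(f)(θ)=E[f(θ−γ_{k+1}H(θ,U))], and P_{k,p}:=P_k∘···∘P_{p−1} for k≤p. Under assumptions (HL) and (HUA), with innovations satisfying E[|U|²]<∞, for every Lipschitz function f and all 0≤k≤p≤N−1, P_{k,p}(f) is Lipschitz with [P_{k,p}(f)]_1 ≤ [f]_1·∏_{i=k}^{p−1}(1−2λ̲γ_{i+1}+C_{H,μ}γ_{i+1}²)^{1/2}, where C_{H,μ}:=2C_H²(1+E[|U|²]). -/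

import Mathlib

open MeasureTheory ProbabilityTheory Filter
open scoped ENNReal NNReal

noncomputable section

namespace FathiFrikha

/-- Euclidean space `ℝ^n`. -/
abbrev Euc (n : ℕ) := EuclideanSpace ℝ (Fin n)

/-- The random variables `U i` are i.i.d. with common law `μ`. -/
def IsIID {Ω : Type*} [MeasurableSpace Ω] {n : ℕ} (P : Measure Ω)
    (U : ℕ → Ω → Euc n) (μ : Measure (Euc n)) : Prop :=
  iIndepFun U P ∧ ∀ i, Measure.map (U i) P = μ

/-- Stochastic approximation scheme started at the point `θ` at step `k`; the last
index counts the number of steps performed after step `k`. -/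
def rmFrom {Ω : Type*} {d q : ℕ} (H : Euc d → Euc q → Euc d) (γ : ℕ → ℝ)
    (U : ℕ → Ω → Euc q) (k : ℕ) (θ : Euc d) : ℕ → Ω → Euc d
  | 0 => fun _ => θ
  | j + 1 => fun ω =>
      rmFrom H γ U k θ j ω - γ (k + j + 1) • H (rmFrom H γ U k θ j ω) (U (k + j + 1) ω)

/-!
Run the two chains started at `θ` and `θ'` with the same innovations. With `Δ` the distance
between them, one step replaces `‖Δ‖²` by
`‖Δ‖² - 2γ⟪Δ, H(θ,U) - H(θ',U)⟫ + γ²‖H(θ,U) - H(θ',U)‖²`, and `U` is independent of the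
past. Integrating in `U` alone, the middle term is controlled by the strong monotonicity
`⟪h θ - h θ', θ - θ'⟫ ≥ λ‖θ - θ'‖²` (integrate (HUA) along the segment) and the last one by
(HL) together with `(1 + ‖u‖)² ≤ 2 (1 + ‖u‖²)`, so the mean of `‖Δ‖²` gets multiplied by at
most `1 - 2λγ + C_{H,μ}γ²` at each step. The Lipschitz bound on `f` and Jensen's inequality
`E‖Δ‖ ≤ (E‖Δ‖²)^{1/2}` conclude.
-/

section Moments

variable {β : Type*} [NormedAddCommGroup β] [MeasurableSpace β] [OpensMeasurableSpace β]
  {μ : Measure β}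

lemma integrable_one_add_norm_sq [IsFiniteMeasure μ] (hU2 : Integrable (fun u => ‖u‖ ^ 2) μ) :
    Integrable (fun u => (1 + ‖u‖) ^ 2) μ :=
  ((integrable_const 2).add (hU2.const_mul 2)).mono' (by fun_prop) <| ae_of_all _ fun u => by
    rw [Real.norm_of_nonneg (by positivity)]
    show (1 + ‖u‖) ^ 2 ≤ 2 + 2 * ‖u‖ ^ 2
    nlinarith [sq_nonneg (1 - ‖u‖)]

lemma integrable_one_add_norm [IsFiniteMeasure μ] (hU2 : Integrable (fun u => ‖u‖ ^ 2) μ) :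
    Integrable (fun u => 1 + ‖u‖) μ :=
  (integrable_one_add_norm_sq hU2).mono' (by fun_prop) <| ae_of_all _ fun u => by
    rw [Real.norm_of_nonneg (by positivity)]
    nlinarith [norm_nonneg u]

lemma integral_one_add_norm_sq_le [IsProbabilityMeasure μ]
    (hU2 : Integrable (fun u => ‖u‖ ^ 2) μ) :
    ∫ u, (1 + ‖u‖) ^ 2 ∂μ ≤ 2 * (1 + ∫ u, ‖u‖ ^ 2 ∂μ) :=
  calc ∫ u, (1 + ‖u‖) ^ 2 ∂μ ≤ ∫ u, (2 + 2 * ‖u‖ ^ 2) ∂μ :=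
        integral_mono (integrable_one_add_norm_sq hU2) ((integrable_const 2).add (hU2.const_mul 2))
          fun u => by nlinarith [sq_nonneg (1 - ‖u‖)]
    _ = 2 * (1 + ∫ u, ‖u‖ ^ 2 ∂μ) := by
        rw [integral_add (integrable_const 2) (hU2.const_mul 2), integral_const, integral_const_mul]
        simp only [probReal_univ, smul_eq_mul, one_mul]
        ring

end Moments

section LipschitzField

variable {E β : Type*} [NormedAddCommGroup E]
  [NormedAddCommGroup β] [MeasurableSpace β] {μ : Measure β} {H : E → β → E} {CH : ℝ}

lemma integrable_sub_of_lipschitz (hHm : ∀ θ, AEStronglyMeasurable (H θ) μ)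
    (hHL : ∀ u θ θ', ‖H θ u - H θ' u‖ ≤ CH * (1 + ‖u‖) * ‖θ - θ'‖)
    (h1 : Integrable (fun u => 1 + ‖u‖) μ) (a b : E) :
    Integrable (fun u => H a u - H b u) μ :=
  (h1.mul_const (CH * ‖a - b‖)).mono' ((hHm a).sub (hHm b)) <| ae_of_all _ fun u =>
    (hHL u a b).trans_eq (by ring)

lemma integrable_sq_norm_sub_of_lipschitz (hHm : ∀ θ, AEStronglyMeasurable (H θ) μ)
    (hHL : ∀ u θ θ', ‖H θ u - H θ' u‖ ≤ CH * (1 + ‖u‖) * ‖θ - θ'‖)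
    (h2 : Integrable (fun u => (1 + ‖u‖) ^ 2) μ) (a b : E) :
    Integrable (fun u => ‖H a u - H b u‖ ^ 2) μ :=
  (h2.mul_const ((CH * ‖a - b‖) ^ 2)).mono' (((hHm a).sub (hHm b)).norm.pow 2) <|
    ae_of_all _ fun u => by
      rw [norm_pow, norm_norm]
      exact (pow_le_pow_left₀ (norm_nonneg _) (hHL u a b) 2).trans_eq (by ring)

lemma integral_sq_norm_sub_le_of_lipschitz (hHm : ∀ θ, AEStronglyMeasurable (H θ) μ)
    (hHL : ∀ u θ θ', ‖H θ u - H θ' u‖ ≤ CH * (1 + ‖u‖) * ‖θ - θ'‖)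
    (h2 : Integrable (fun u => (1 + ‖u‖) ^ 2) μ) (a b : E) :
    ∫ u, ‖H a u - H b u‖ ^ 2 ∂μ ≤ CH ^ 2 * (∫ u, (1 + ‖u‖) ^ 2 ∂μ) * ‖a - b‖ ^ 2 :=
  calc ∫ u, ‖H a u - H b u‖ ^ 2 ∂μ ≤ ∫ u, (1 + ‖u‖) ^ 2 * (CH * ‖a - b‖) ^ 2 ∂μ :=
        integral_mono (integrable_sq_norm_sub_of_lipschitz hHm hHL h2 a b)
          (h2.mul_const _) fun u =>
            (pow_le_pow_left₀ (norm_nonneg _) (hHL u a b) 2).trans_eq (by ring)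
    _ = CH ^ 2 * (∫ u, (1 + ‖u‖) ^ 2 ∂μ) * ‖a - b‖ ^ 2 := by
        rw [integral_mul_const]
        ring

end LipschitzField

section MonotoneField

variable {E β : Type*} [NormedAddCommGroup E] [InnerProductSpace ℝ E] [MeasurableSpace β]
  {μ : Measure β} {H : E → β → E}

-- A non-integrable section would make every section non-integrable, hence the mean field the
-- junk value `0`, which is not coercive.
lemma integrable_of_fderiv_inner_ge [Nontrivial E]
    (hsub : ∀ a b, Integrable (fun u => H a u - H b u) μ) {lmin : ℝ} (hlmin : 0 < lmin) (θ₀ : E)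
    (hHUA : ∀ ξ, lmin * ‖ξ‖ ^ 2 ≤ inner ℝ (fderiv ℝ (fun θ => ∫ u, H θ u ∂μ) θ₀ ξ) ξ)
    (θ : E) : Integrable (H θ) μ := by
  by_contra hθ
  have hmean : (fun θ => ∫ u, H θ u ∂μ) = 0 := funext fun ϑ => integral_undef fun hϑ =>
    hθ <| (hϑ.sub (hsub ϑ θ)).congr <| ae_of_all _ fun u => sub_sub_cancel _ _
  obtain ⟨ξ, hξ⟩ := exists_ne (0 : E)
  have hcoercive := hHUA ξ
  rw [hmean] at hcoercive
  simp only [fderiv_zero, Pi.zero_apply, zero_apply, inner_zero_left] at hcoercive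
  nlinarith [mul_pos hlmin (pow_pos (norm_pos_iff.2 hξ) 2)]

lemma inner_sub_ge_of_fderiv_inner_ge {h : E → E} (hh : Differentiable ℝ h) {lmin : ℝ}
    (hD : ∀ x ξ, lmin * ‖ξ‖ ^ 2 ≤ inner ℝ (fderiv ℝ h x ξ) ξ) (a b : E) :
    lmin * ‖a - b‖ ^ 2 ≤ inner ℝ (h a - h b) (a - b) := by
  set v := a - b
  let φ : ℝ → ℝ := fun t => inner ℝ (h (b + t • v)) v - t * (lmin * ‖v‖ ^ 2)
  have hφ' : ∀ t, HasDerivAt φ (inner ℝ (fderiv ℝ h (b + t • v) v) v - lmin * ‖v‖ ^ 2) t := by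
    intro t
    have hline : HasDerivAt (fun t : ℝ => b + t • v) v t := by
      simpa using ((hasDerivAt_id t).smul_const v).const_add b
    have := ((hh _).hasFDerivAt.comp_hasDerivAt t hline).inner ℝ (hasDerivAt_const t v)
    simp only [inner_zero_right, zero_add] at this
    exact this.sub (hasDerivAt_mul_const _)
  have hφ01 := monotone_of_hasDerivAt_nonneg hφ' (fun t => sub_nonneg.2 (hD _ v)) zero_le_one
  simp only [φ, zero_smul, add_zero, one_smul, zero_mul, sub_zero, one_mul,
    add_sub_cancel, v] at hφ01
  rw [inner_sub_left]
  linarith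

end MonotoneField

lemma sq_norm_sub_smul_sub_sub_smul {E : Type*} [NormedAddCommGroup E] [InnerProductSpace ℝ E]
    (a b x y : E) (s : ℝ) :
    ‖(a - s • x) - (b - s • y)‖ ^ 2
      = ‖a - b‖ ^ 2 - 2 * s * inner ℝ (a - b) (x - y) + s ^ 2 * ‖x - y‖ ^ 2 := by
  rw [show (a - s • x) - (b - s • y) = (a - b) - s • (x - y) by rw [smul_sub]; abel,
    norm_sub_sq_real, real_inner_smul_right, norm_smul, Real.norm_eq_abs, mul_pow, sq_abs]
  ring

section OneStep

variable {E β : Type*} [NormedAddCommGroup E] [InnerProductSpace ℝ E] [CompleteSpace E]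
  [NormedAddCommGroup β] [MeasurableSpace β] [OpensMeasurableSpace β]
  {μ : Measure β} [IsProbabilityMeasure μ] {H : E → β → E} {CH lmin : ℝ}

lemma integral_sq_norm_step_le (hint : ∀ θ, Integrable (H θ) μ)
    (hHL : ∀ u θ θ', ‖H θ u - H θ' u‖ ≤ CH * (1 + ‖u‖) * ‖θ - θ'‖)
    (hU2 : Integrable (fun u => ‖u‖ ^ 2) μ)
    (hmono : ∀ a b, lmin * ‖a - b‖ ^ 2 ≤ inner ℝ (∫ u, H a u ∂μ - ∫ u, H b u ∂μ) (a - b))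
    {s : ℝ} (hs : 0 ≤ s) (a b : E) :
    Integrable (fun u => ‖(a - s • H a u) - (b - s • H b u)‖ ^ 2) μ ∧
      ∫ u, ‖(a - s • H a u) - (b - s • H b u)‖ ^ 2 ∂μ
        ≤ (1 - 2 * lmin * s + 2 * CH ^ 2 * (1 + ∫ u, ‖u‖ ^ 2 ∂μ) * s ^ 2) * ‖a - b‖ ^ 2 := by
  have hHm : ∀ θ, AEStronglyMeasurable (H θ) μ := fun θ => (hint θ).1
  have hsub := integrable_sub_of_lipschitz hHm hHL (integrable_one_add_norm hU2) a b
  have hinner : Integrable (fun u => inner ℝ (a - b) (H a u - H b u)) μ := hsub.const_inner _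
  have hsq := integrable_sq_norm_sub_of_lipschitz hHm hHL (integrable_one_add_norm_sq hU2) a b
  have hdrift : lmin * ‖a - b‖ ^ 2 ≤ ∫ u, inner ℝ (a - b) (H a u - H b u) ∂μ := by
    rw [integral_inner hsub, integral_sub (hint a) (hint b), real_inner_comm]
    exact hmono a b
  have hmoment := mul_le_mul_of_nonneg_left (integral_one_add_norm_sq_le hU2) (sq_nonneg CH)
  have hnoise : ∫ u, ‖H a u - H b u‖ ^ 2 ∂μ
      ≤ 2 * CH ^ 2 * (1 + ∫ u, ‖u‖ ^ 2 ∂μ) * ‖a - b‖ ^ 2 :=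
    (integral_sq_norm_sub_le_of_lipschitz hHm hHL (integrable_one_add_norm_sq hU2) a b).trans
      (mul_le_mul_of_nonneg_right (by linarith) (sq_nonneg _))
  simp only [sq_norm_sub_smul_sub_sub_smul]
  have hdrift_int : Integrable
      (fun u => ‖a - b‖ ^ 2 - 2 * s * inner ℝ (a - b) (H a u - H b u)) μ :=
    (integrable_const _).sub (hinner.const_mul _)
  refine ⟨hdrift_int.add (hsq.const_mul _), ?_⟩
  rw [integral_add hdrift_int (hsq.const_mul _), integral_sub (integrable_const _)
    (hinner.const_mul _), integral_const, integral_const_mul, integral_const_mul]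
  simp only [probReal_univ, smul_eq_mul, one_mul]
  nlinarith [mul_le_mul_of_nonneg_left hdrift (by positivity : (0 : ℝ) ≤ 2 * s),
    mul_le_mul_of_nonneg_left hnoise (sq_nonneg s)]

lemma lintegral_sq_norm_step_le (hint : ∀ θ, Integrable (H θ) μ)
    (hHL : ∀ u θ θ', ‖H θ u - H θ' u‖ ≤ CH * (1 + ‖u‖) * ‖θ - θ'‖)
    (hU2 : Integrable (fun u => ‖u‖ ^ 2) μ)
    (hmono : ∀ a b, lmin * ‖a - b‖ ^ 2 ≤ inner ℝ (∫ u, H a u ∂μ - ∫ u, H b u ∂μ) (a - b))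
    {s : ℝ} (hs : 0 ≤ s) (a b : E) :
    ∫⁻ u, ENNReal.ofReal (‖(a - s • H a u) - (b - s • H b u)‖ ^ 2) ∂μ
      ≤ ENNReal.ofReal ((√(1 - 2 * lmin * s + 2 * CH ^ 2 * (1 + ∫ u, ‖u‖ ^ 2 ∂μ) * s ^ 2)
          * ‖a - b‖) ^ 2) := by
  obtain ⟨hint_step, hle⟩ := integral_sq_norm_step_le hint hHL hU2 hmono hs a b
  -- `√x ^ 2 = max x 0`, so the factor needs no sign condition.
  rw [← ofReal_integral_eq_lintegral_ofReal hint_step (ae_of_all _ fun u => sq_nonneg _),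
    mul_pow, Real.sq_sqrt']
  refine ENNReal.ofReal_le_ofReal (hle.trans ?_)
  gcongr
  exact le_max_left _ _

end OneStep

section Probability

variable {Ω : Type*} [MeasurableSpace Ω] {P : Measure Ω}

lemma lintegral_comp_le_of_indepFun [IsFiniteMeasure P] {α β : Type*} [MeasurableSpace α]
    [MeasurableSpace β] {X : Ω → α} {V : Ω → β} (hX : AEMeasurable X P) (hV : AEMeasurable V P)
    (hXV : IndepFun X V P) {g : α × β → ℝ≥0∞} (hg : Measurable g) {φ : α → ℝ≥0∞}
    (hφ : Measurable φ) (hgφ : ∀ x, ∫⁻ u, g (x, u) ∂(P.map V) ≤ φ x) :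
    ∫⁻ ω, g (X ω, V ω) ∂P ≤ ∫⁻ ω, φ (X ω) ∂P :=
  calc ∫⁻ ω, g (X ω, V ω) ∂P = ∫⁻ z, g z ∂((P.map X).prod (P.map V)) := by
        rw [← hXV.map_prod_eq_prod_map_map hX hV, lintegral_map' hg.aemeasurable (hX.prodMk hV)]
    _ = ∫⁻ x, ∫⁻ u, g (x, u) ∂(P.map V) ∂(P.map X) := lintegral_prod _ hg.aemeasurable
    _ ≤ ∫⁻ x, φ x ∂(P.map X) := lintegral_mono hgφ
    _ = ∫⁻ ω, φ (X ω) ∂P := lintegral_map' hφ.aemeasurable hX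

lemma integral_le_of_lintegral_sq_le [IsProbabilityMeasure P] {Z : Ω → ℝ}
    (hZ : AEStronglyMeasurable Z P) {C : ℝ} (hC : 0 ≤ C)
    (h : ∫⁻ ω, ENNReal.ofReal (Z ω ^ 2) ∂P ≤ ENNReal.ofReal (C ^ 2)) :
    Integrable Z P ∧ ∫ ω, Z ω ∂P ≤ C := by
  have hsq_nonneg : 0 ≤ᵐ[P] fun ω => Z ω ^ 2 := ae_of_all _ fun ω => sq_nonneg _
  have hZ2 : MemLp Z 2 P := (memLp_two_iff_integrable_sq hZ).2
    ⟨hZ.pow 2, (hasFiniteIntegral_iff_ofReal hsq_nonneg).2 (h.trans_lt ENNReal.ofReal_lt_top)⟩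
  have hsq : ∫ ω, Z ω ^ 2 ∂P ≤ C ^ 2 := by
    rw [integral_eq_lintegral_of_nonneg_ae hsq_nonneg (hZ.pow 2)]
    exact ENNReal.toReal_le_of_le_ofReal (sq_nonneg C) h
  have hjensen := variance_nonneg Z P
  rw [variance_eq_sub hZ2] at hjensen
  refine ⟨hZ2.integrable one_le_two, ?_⟩
  simp only [Pi.pow_apply] at hjensen
  nlinarith

lemma abs_integral_comp_sub_comp_le {E : Type*} [NormedAddCommGroup E] {f : E → ℝ} {K : ℝ≥0}
    (hf : LipschitzWith K f) {X Y : Ω → E} (hX : AEStronglyMeasurable X P)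
    (hY : AEStronglyMeasurable Y P) (hXY : Integrable (fun ω => ‖X ω - Y ω‖) P) :
    |∫ ω, f (X ω) ∂P - ∫ ω, f (Y ω) ∂P| ≤ K * ∫ ω, ‖X ω - Y ω‖ ∂P := by
  have hpt : ∀ ω, ‖f (X ω) - f (Y ω)‖ ≤ K * ‖X ω - Y ω‖ := fun ω => by
    simpa only [dist_eq_norm] using hf.dist_le_mul (X ω) (Y ω)
  have hdiff : Integrable (fun ω => f (X ω) - f (Y ω)) P :=
    (hXY.const_mul K).mono'
      ((hf.continuous.comp_aestronglyMeasurable hX).sub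
        (hf.continuous.comp_aestronglyMeasurable hY)) (ae_of_all _ hpt)
  by_cases hfY : Integrable (fun ω => f (Y ω)) P
  · have hfX : Integrable (fun ω => f (X ω)) P :=
      (hdiff.add hfY).congr (ae_of_all _ fun ω => sub_add_cancel _ _)
    rw [← integral_sub hfX hfY, ← integral_const_mul]
    exact (abs_integral_le_integral_abs).trans
      (integral_mono hdiff.abs (hXY.const_mul K) hpt)
  · have hfX : ¬ Integrable (fun ω => f (X ω)) P := fun hfX =>
      hfY ((hfX.sub hdiff).congr (ae_of_all _ fun ω => sub_sub_cancel _ _))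
    rw [integral_undef hfX, integral_undef hfY, sub_zero, abs_zero]
    exact mul_nonneg K.coe_nonneg (integral_nonneg fun ω => norm_nonneg _)

end Probability

section Scheme

variable {Ω : Type*} {d q : ℕ}
  {H : Euc d → Euc q → Euc d} {γ : ℕ → ℝ} {U : ℕ → Ω → Euc q}

lemma measurable_rmFrom (hH : Measurable fun p : Euc d × Euc q => H p.1 p.2)
    {m : MeasurableSpace Ω} (k : ℕ) (θ : Euc d) (j : ℕ)
    (hU : ∀ i ∈ Set.Ioc k (k + j), Measurable[m] (U i)) :
    Measurable[m] (rmFrom H γ U k θ j) := by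
  induction j with
  | zero => exact measurable_const
  | succ j ih =>
    have hj := ih fun i hi => hU i ⟨hi.1, hi.2.trans (Nat.le_succ _)⟩
    have hnext := hU (k + j + 1) ⟨by omega, le_rfl⟩
    exact hj.sub ((hH.comp (hj.prodMk hnext)).const_smul (γ (k + j + 1)))

variable [MeasurableSpace Ω] {P : Measure Ω}

lemma rmFrom_congr_ae {V : ℕ → Ω → Euc q} (hUV : ∀ i, U i =ᵐ[P] V i) (k : ℕ) (θ : Euc d)
    (j : ℕ) : rmFrom H γ U k θ j =ᵐ[P] rmFrom H γ V k θ j := by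
  induction j with
  | zero => rfl
  | succ j ih =>
    filter_upwards [ih, hUV (k + j + 1)] with ω hj hU
    simp only [rmFrom, hj, hU]

lemma indepFun_rmFrom_prod (hH : Measurable fun p : Euc d × Euc q => H p.1 p.2)
    (hU : iIndepFun U P) (hUm : ∀ i, Measurable (U i)) (k : ℕ) (θ θ' : Euc d) (j : ℕ) :
    IndepFun (fun ω => (rmFrom H γ U k θ j ω, rmFrom H γ U k θ' j ω)) (U (k + j + 1)) P := by
  have hpast := indep_iSup_of_disjoint (fun i => (hUm i).comap_le) hU.iIndep
    (S := Set.Ioc k (k + j)) (T := {k + j + 1}) (by simp)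
  have hpast_meas : ∀ ϑ, Measurable[⨆ i ∈ Set.Ioc k (k + j), MeasurableSpace.comap (U i) _]
      (rmFrom H γ U k ϑ j) := fun ϑ =>
    measurable_rmFrom hH k ϑ j fun i hi => (comap_measurable (U i)).mono
      (le_iSup₂ (f := fun i (_ : i ∈ Set.Ioc k (k + j)) => MeasurableSpace.comap (U i) _) i hi)
      le_rfl
  rw [IndepFun_iff_Indep]
  exact indep_of_indep_of_le_right
    (indep_of_indep_of_le_left hpast ((hpast_meas θ).prodMk (hpast_meas θ')).comap_le) (by simp)

lemma IsIID.exists_measurable_modification {n : ℕ} {V : ℕ → Ω → Euc n} {μ : Measure (Euc n)}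
    [NeZero μ] (hV : IsIID P V μ) :
    ∃ V' : ℕ → Ω → Euc n, (∀ i, Measurable (V' i)) ∧ (∀ i, V i =ᵐ[P] V' i) ∧ IsIID P V' μ := by
  have hVm : ∀ i, AEMeasurable (V i) P := fun i => by
    by_contra h
    exact NeZero.ne μ (by rw [← hV.2 i, Measure.map_of_not_aemeasurable h])
  refine ⟨fun i => (hVm i).mk, fun i => (hVm i).measurable_mk, fun i => (hVm i).ae_eq_mk,
    hV.1.congr fun i => (hVm i).ae_eq_mk, fun i => ?_⟩
  rw [← Measure.map_congr (hVm i).ae_eq_mk, hV.2 i]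

lemma lintegral_sq_dist_rmFrom_le [IsProbabilityMeasure P] {μ : Measure (Euc q)}
    (hH : Measurable fun p : Euc d × Euc q => H p.1 p.2) (hUm : ∀ i, Measurable (U i))
    (hU : IsIID P U μ) {ρ : ℕ → ℝ}
    (hstep : ∀ i a b, ∫⁻ u, ENNReal.ofReal (‖(a - γ i • H a u) - (b - γ i • H b u)‖ ^ 2) ∂μ
      ≤ ENNReal.ofReal ((ρ i * ‖a - b‖) ^ 2))
    (k : ℕ) (θ θ' : Euc d) (j : ℕ) :
    ∫⁻ ω, ENNReal.ofReal (‖rmFrom H γ U k θ j ω - rmFrom H γ U k θ' j ω‖ ^ 2) ∂P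
      ≤ ENNReal.ofReal (((∏ i ∈ Finset.range j, ρ (k + i + 1)) * ‖θ - θ'‖) ^ 2) := by
  induction j with
  | zero => simp [rmFrom]
  | succ j ih =>
    set n := k + j + 1 with hn
    have hW : Measurable fun ω => (rmFrom H γ U k θ j ω, rmFrom H γ U k θ' j ω) :=
      (measurable_rmFrom hH k θ j fun i _ => hUm i).prodMk
        (measurable_rmFrom hH k θ' j fun i _ => hUm i)
    calc ∫⁻ ω, ENNReal.ofReal (‖rmFrom H γ U k θ (j + 1) ω - rmFrom H γ U k θ' (j + 1) ω‖ ^ 2) ∂P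
        ≤ ∫⁻ ω, ENNReal.ofReal
            ((ρ n * ‖rmFrom H γ U k θ j ω - rmFrom H γ U k θ' j ω‖) ^ 2) ∂P :=
          lintegral_comp_le_of_indepFun (g := fun zu => ENNReal.ofReal
              (‖(zu.1.1 - γ n • H zu.1.1 zu.2) - (zu.1.2 - γ n • H zu.1.2 zu.2)‖ ^ 2))
            (φ := fun z => ENNReal.ofReal ((ρ n * ‖z.1 - z.2‖) ^ 2))
            hW.aemeasurable (hUm n).aemeasurable (indepFun_rmFrom_prod hH hU.1 hUm k θ θ' j)
            (by fun_prop) (by fun_prop) fun z => by rw [hU.2 n]; exact hstep n z.1 z.2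
      _ = ENNReal.ofReal (ρ n ^ 2)
            * ∫⁻ ω, ENNReal.ofReal (‖rmFrom H γ U k θ j ω - rmFrom H γ U k θ' j ω‖ ^ 2) ∂P := by
          rw [← lintegral_const_mul' _ _ ENNReal.ofReal_ne_top]
          simp only [mul_pow, ENNReal.ofReal_mul (sq_nonneg _)]
      _ ≤ ENNReal.ofReal (ρ n ^ 2)
            * ENNReal.ofReal (((∏ i ∈ Finset.range j, ρ (k + i + 1)) * ‖θ - θ'‖) ^ 2) := by
          gcongr
      _ = ENNReal.ofReal (((∏ i ∈ Finset.range (j + 1), ρ (k + i + 1)) * ‖θ - θ'‖) ^ 2) := by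
          rw [← ENNReal.ofReal_mul (sq_nonneg _), Finset.prod_range_succ, ← hn]
          congr 1
          ring

end Scheme

theorem rm_kernel_lipschitz_general
    {Ω : Type} [MeasurableSpace Ω] (P : Measure Ω) [IsProbabilityMeasure P]
    {d q : ℕ} (H : Euc d → Euc q → Euc d)
    (hHmeas : Measurable fun p : Euc d × Euc q => H p.1 p.2)
    (μ : Measure (Euc q)) [IsProbabilityMeasure μ]
    (U : ℕ → Ω → Euc q) (hU : IsIID P U μ)
    (γ : ℕ → ℝ) (hγpos : ∀ n, 0 < γ n)
    (hU2 : Integrable (fun u : Euc q => ‖u‖ ^ 2) μ)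
    (CH : ℝ)
    (hHL : ∀ u : Euc q, ∀ θ θ' : Euc d, ‖H θ u - H θ' u‖ ≤ CH * (1 + ‖u‖) * ‖θ - θ'‖)
    (lmin : ℝ) (hlmin : 0 < lmin)
    (hdiff : ContDiff ℝ 1 fun θ : Euc d => ∫ u, H θ u ∂μ)
    (hHUA : ∀ θ ξ : Euc d,
      lmin * ‖ξ‖ ^ 2 ≤ (inner ℝ (fderiv ℝ (fun θ' : Euc d => ∫ u, H θ' u ∂μ) θ ξ) ξ : ℝ))
    (N : ℕ) :
    let CHμ : ℝ := 2 * CH ^ 2 * (1 + ∫ u, ‖u‖ ^ 2 ∂μ)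
    ∀ (f : Euc d → ℝ) (Kf : ℝ≥0), LipschitzWith Kf f →
      ∀ k p : ℕ, k ≤ p → p ≤ N - 1 → ∀ θ θ' : Euc d,
        |(∫ ω, f (rmFrom H γ U k θ (p - k) ω) ∂P) -
            ∫ ω, f (rmFrom H γ U k θ' (p - k) ω) ∂P|
          ≤ (Kf : ℝ) *
            (∏ i ∈ Finset.Ico k p, Real.sqrt (1 - 2 * lmin * γ (i + 1) + CHμ * γ (i + 1) ^ 2)) *
            ‖θ - θ'‖ := by
  intro CHμ f Kf hf k p _ _ θ θ'
  rcases subsingleton_or_nontrivial (Euc d) with hE | hE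
  · simp [Subsingleton.elim θ θ']
  obtain ⟨V, hVm, hUV, hV⟩ := hU.exists_measurable_modification
  have hint : ∀ θ, Integrable (H θ) μ := integrable_of_fderiv_inner_ge
    (integrable_sub_of_lipschitz
      (fun θ => (hHmeas.comp measurable_prodMk_left).aestronglyMeasurable) hHL
      (integrable_one_add_norm hU2)) hlmin θ (hHUA θ)
  have hmono := inner_sub_ge_of_fderiv_inner_ge (hdiff.differentiable one_ne_zero) hHUA
  have hmeas : ∀ ϑ, Measurable (rmFrom H γ V k ϑ (p - k)) := fun ϑ =>
    measurable_rmFrom hHmeas k ϑ _ fun i _ => hVm i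
  obtain ⟨hdist, hdist_le⟩ := integral_le_of_lintegral_sq_le
    ((hmeas θ).sub (hmeas θ')).norm.aestronglyMeasurable (by positivity)
    (lintegral_sq_dist_rmFrom_le hHmeas hVm hV
      (fun i => lintegral_sq_norm_step_le hint hHL hU2 hmono (hγpos i).le) k θ θ' (p - k))
  have hfV : ∀ ϑ, ∫ ω, f (rmFrom H γ U k ϑ (p - k) ω) ∂P
      = ∫ ω, f (rmFrom H γ V k ϑ (p - k) ω) ∂P := fun ϑ =>
    integral_congr_ae ((rmFrom_congr_ae hUV k ϑ _).fun_comp f)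
  rw [hfV θ, hfV θ', Finset.prod_Ico_eq_prod_range, mul_assoc]
  exact (abs_integral_comp_sub_comp_le hf (hmeas θ).aestronglyMeasurable
    (hmeas θ').aestronglyMeasurable hdist).trans
    (mul_le_mul_of_nonneg_left hdist_le Kf.coe_nonneg)

/-- **Proposition 4.2bis** (Fathi–Frikha): Lipschitz control of the iterated transition
kernels `P_{k,p}(f)(θ) = E[f(θ_p) | θ_k = θ]` of the stochastic approximation scheme
under (HL) and (HUA). -/
theorem rm_kernel_lipschitz
    {Ω : Type} [MeasurableSpace Ω] (P : Measure Ω) [IsProbabilityMeasure P]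
    {d q : ℕ} (H : Euc d → Euc q → Euc d)
    (hHmeas : Measurable fun p : Euc d × Euc q => H p.1 p.2)
    (μ : Measure (Euc q)) [IsProbabilityMeasure μ]
    (U : ℕ → Ω → Euc q) (hU : IsIID P U μ)
    (γ : ℕ → ℝ) (hγpos : ∀ n, 0 < γ n) (hγdiv : ¬ Summable γ)
    (hγsq : Summable fun n => γ n ^ 2)
    (hU2 : Integrable (fun u : Euc q => ‖u‖ ^ 2) μ)
    (CH : ℝ) (hCH : 0 < CH)
    (hHL : ∀ u : Euc q, ∀ θ θ' : Euc d, ‖H θ u - H θ' u‖ ≤ CH * (1 + ‖u‖) * ‖θ - θ'‖)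
    (lmin : ℝ) (hlmin : 0 < lmin)
    (hdiff : ContDiff ℝ 1 fun θ : Euc d => ∫ u, H θ u ∂μ)
    (hHUA : ∀ θ ξ : Euc d,
      lmin * ‖ξ‖ ^ 2 ≤ (inner ℝ (fderiv ℝ (fun θ' : Euc d => ∫ u, H θ' u ∂μ) θ ξ) ξ : ℝ))
    (N : ℕ) (hN : 0 < N) :
    let CHμ : ℝ := 2 * CH ^ 2 * (1 + ∫ u, ‖u‖ ^ 2 ∂μ)
    ∀ (f : Euc d → ℝ) (Kf : ℝ≥0), LipschitzWith Kf f →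
      ∀ k p : ℕ, k ≤ p → p ≤ N - 1 → ∀ θ θ' : Euc d,
        |(∫ ω, f (rmFrom H γ U k θ (p - k) ω) ∂P) -
            ∫ ω, f (rmFrom H γ U k θ' (p - k) ω) ∂P|
          ≤ (Kf : ℝ) *
            (∏ i ∈ Finset.Ico k p, Real.sqrt (1 - 2 * lmin * γ (i + 1) + CHμ * γ (i + 1) ^ 2)) *
            ‖θ - θ'‖ :=
  rm_kernel_lipschitz_general P H hHmeas μ U hU γ hγpos hU2 CH hHL lmin hlmin hdiff hHUA N

end FathiFrikha
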